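/- Let $N \in \{4,5,6\}$, $p = \frac{N+2}{N-2}$. For each $\gamma$ in a sequence tending to $+\infty$, let $u_\gamma$ be a radial sign-changing solution on $B_1 \subset \mathbb{R}^N$ of $-\Delta u = \lambda(\gamma)u + |u|^{p-1}u$ with exactly two nodal regions, $u_\gamma(0) = \|u_\gamma\|_\infty \to \infty$, and nodal radius $r_\gamma \to 0$. Assume that for each $\mu \in (0, \lambda_1(B_1))$ small, the positive radial solution of $-\Delta v = \mu v + v^p$ in $B_1$, $v = 0$ on $\partial B_1$, is unique and minimizes the energy $J_\mu$ over the Nehari manifold, and that the least energy $c_\mu \to \frac{1}{N}S^{N/2}$ as $\mu \to 0^+$. Then $J_{\lambda(\gamma)}(u_\gamma^+) \to \frac{1}{N}S^{N/2}$ as $\gamma \to \infty$, where $S$ is the best Sobolev constant for $\mathcal{D}^{1,2}(\mathbb{R}^N) \hookrightarrow L^{2^*}(\mathbb{R}^N)$. -/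

import Mathlib

open Real MeasureTheory Metric Set Filter

/-- The Laplacian of `f : ℝ^N → ℝ`, as the sum of the second derivatives along the
coordinate directions. -/
noncomputable def lap {N : ℕ} (f : EuclideanSpace ℝ (Fin N) → ℝ)
    (x : EuclideanSpace ℝ (Fin N)) : ℝ :=
  ∑ i : Fin N, iteratedDeriv 2 (fun s : ℝ => f (x + s • EuclideanSpace.single i 1)) 0

/-- The energy functional `J_μ(v) = ½∫_{B₁}(|∇v|² - μ v²) - (1/2*)∫_{B₁}|v|^{2*}`,
with `2* = 2N/(N-2)`. -/
noncomputable def energy (N : ℕ) (μ : ℝ) (v : EuclideanSpace ℝ (Fin N) → ℝ) : ℝ :=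
  (1 / 2) * (∫ x in ball (0 : EuclideanSpace ℝ (Fin N)) 1,
      (‖gradient v x‖ ^ 2 - μ * (v x) ^ 2)) -
    (1 / (2 * (N : ℝ) / ((N : ℝ) - 2))) *
      ∫ x in ball (0 : EuclideanSpace ℝ (Fin N)) 1, |v x| ^ (2 * (N : ℝ) / ((N : ℝ) - 2))

/-!
Since `u > 0` on `B_r` and `u < 0` on the annulus `r < |x| < 1`, the rescaled positive part
`v(y) = r^((N-2)/2) u(r y)` is a positive radial solution in `B₁` of `-Δv = λr² v + v^p` vanishing
on `∂B₁`, and the energy is invariant under this rescaling; hence `J_λ(u⁺) = J_{λr²}(v) = c(λr²)`.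
It remains to see that `λr² → 0`, i.e. that `λ` stays bounded once `r < 1/2`. On the annulus
`1/2 < |x| < 1` the function `-u` is a positive radial supersolution,
`h'' + (N-1)h'/ρ + λh ≤ 0`; after the substitution `z = ρ^((N-1)/2) h` this becomes
`z'' ≤ -K² z` with `K² = λ - (N-1)(N-3)`, and Sturm comparison with `sin (K ρ)` forbids a positive
such `z` on an interval longer than `π/K`. Hence `λ ≤ (N-1)(N-3) + 4π²`.
-/

open scoped Topology

theorem hasDerivAt_sqrt_sq_add {ρ : ℝ} (hρ : ρ ≠ 0) (s : ℝ) :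
    HasDerivAt (fun s => √(ρ ^ 2 + s ^ 2)) (s / √(ρ ^ 2 + s ^ 2)) s := by
  have hpos : 0 < ρ ^ 2 + s ^ 2 := by positivity
  convert ((hasDerivAt_pow 2 s).const_add (ρ ^ 2)).sqrt hpos.ne' using 1
  field_simp
  ring

theorem iteratedDeriv_two_comp_sqrt_sq_add {G : ℝ → ℝ} (hG : ContDiff ℝ 2 G) {ρ : ℝ}
    (hρ : 0 < ρ) : iteratedDeriv 2 (fun s => G √(ρ ^ 2 + s ^ 2)) 0 = deriv G ρ / ρ := by
  have hq0 : √(ρ ^ 2 + 0 ^ 2) = ρ := by simp [sqrt_sq hρ.le]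
  have hq : ContDiffAt ℝ 2 (fun s : ℝ => √(ρ ^ 2 + s ^ 2)) 0 :=
    (contDiffAt_const.add (contDiffAt_id.pow 2)).sqrt (by simp [hρ.ne'])
  have hq' : deriv (fun s : ℝ => √(ρ ^ 2 + s ^ 2)) = fun s => s / √(ρ ^ 2 + s ^ 2) :=
    funext fun s => (hasDerivAt_sqrt_sq_add hρ.ne' s).deriv
  have hq'' : iteratedDeriv 2 (fun s : ℝ => √(ρ ^ 2 + s ^ 2)) 0 = 1 / ρ := by
    rw [iteratedDeriv_succ, iteratedDeriv_one, hq']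
    refine HasDerivAt.deriv (((hasDerivAt_id' (0 : ℝ)).fun_div (hasDerivAt_sqrt_sq_add hρ.ne' 0)
      (by rw [hq0]; exact hρ.ne')).congr_deriv ?_)
    rw [hq0]
    field_simp
    ring
  have := iteratedDeriv_comp_two (g := G) (hG.contDiffAt) hq
  rw [Function.comp_def] at this
  rw [this, hq'', hq', hq0]
  simp [div_eq_mul_inv]

theorem add_le_zero_of_deriv2_le_neg_sq_mul {z z' z'' : ℝ → ℝ} {a K : ℝ} (hK : 0 < K)
    (hz : ∀ ρ ∈ Icc a (a + π / K), HasDerivAt z (z' ρ) ρ)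
    (hz' : ∀ ρ ∈ Icc a (a + π / K), HasDerivAt z' (z'' ρ) ρ)
    (hineq : ∀ ρ ∈ Icc a (a + π / K), z'' ρ ≤ -K ^ 2 * z ρ) :
    z a + z (a + π / K) ≤ 0 := by
  set b := a + π / K
  have hab : a ≤ b := le_add_of_nonneg_right (by positivity)
  -- the Wronskian of `z` and `sin (K (ρ - a))`, which solves `y'' = -K² y` and vanishes at `a, b`
  set W : ℝ → ℝ := fun ρ => z' ρ * sin (K * (ρ - a)) - K * cos (K * (ρ - a)) * z ρ
  have hW : ∀ ρ ∈ Icc a b, HasDerivAt W ((z'' ρ + K ^ 2 * z ρ) * sin (K * (ρ - a))) ρ := by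
    intro ρ hρ
    have harg : HasDerivAt (fun ρ => K * (ρ - a)) K ρ := by
      simpa using ((hasDerivAt_id ρ).sub_const a).const_mul K
    refine (((hz' ρ hρ).fun_mul ((hasDerivAt_sin _).comp ρ harg)).sub
      ((((hasDerivAt_cos _).comp ρ harg).const_mul K).fun_mul (hz ρ hρ))).congr_deriv ?_
    simp only [Function.comp_apply]
    ring
  have hanti : AntitoneOn W (Icc a b) := by
    refine antitoneOn_of_hasDerivWithinAt_nonpos (convex_Icc a b)
      (fun ρ hρ => (hW ρ hρ).continuousAt.continuousWithinAt)
      (fun ρ hρ => (hW ρ (interior_subset hρ)).hasDerivWithinAt) fun ρ hρ => ?_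
    rw [interior_Icc] at hρ
    have hsin : 0 ≤ sin (K * (ρ - a)) := by
      refine sin_nonneg_of_nonneg_of_le_pi (by nlinarith [hρ.1]) ?_
      calc K * (ρ - a) ≤ K * (π / K) := by gcongr; linarith [hρ.2]
        _ = π := by field_simp
    exact mul_nonpos_of_nonpos_of_nonneg (by linarith [hineq ρ (Ioo_subset_Icc_self hρ)]) hsin
  have hWb : W b = K * z b := by
    simp [W, b, show K * (π / K) = π by field_simp]
  have := hanti ⟨le_rfl, hab⟩ ⟨hab, le_rfl⟩ hab
  simp only [hWb, W, sub_self, mul_zero, sin_zero, cos_zero] at this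
  nlinarith

theorem sub_le_pi_div_of_pos_of_deriv2_le_neg_sq_mul {z z' z'' : ℝ → ℝ} {a b K : ℝ} (hK : 0 < K)
    (hz : ∀ ρ ∈ Ioo a b, HasDerivAt z (z' ρ) ρ) (hz' : ∀ ρ ∈ Ioo a b, HasDerivAt z' (z'' ρ) ρ)
    (hpos : ∀ ρ ∈ Ioo a b, 0 < z ρ) (hineq : ∀ ρ ∈ Ioo a b, z'' ρ ≤ -K ^ 2 * z ρ) :
    b - a ≤ π / K := by
  by_contra! hlen
  have hπK : 0 < π / K := by positivity
  set c := a + (b - a - π / K) / 2 with hc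
  have hsub : Icc c (c + π / K) ⊆ Ioo a b := fun ρ hρ => by
    constructor <;> linarith [hρ.1, hρ.2]
  have := add_le_zero_of_deriv2_le_neg_sq_mul hK (fun ρ hρ => hz ρ (hsub hρ))
    (fun ρ hρ => hz' ρ (hsub hρ)) fun ρ hρ => hineq ρ (hsub hρ)
  linarith [hpos c (hsub ⟨le_rfl, by linarith⟩), hpos _ (hsub ⟨by linarith, le_rfl⟩)]

theorem hasDerivAt_rpow_mul_of_pos {h : ℝ → ℝ} {h' m ρ : ℝ} (hρ : 0 < ρ)
    (hd : HasDerivAt h h' ρ) :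
    HasDerivAt (fun x => x ^ m * h x) (ρ ^ m * (m * h ρ / ρ + h')) ρ :=
  ((hasDerivAt_rpow_const (p := m) (Or.inl hρ.ne')).mul hd).congr_deriv (by
    rw [rpow_sub_one hρ.ne']
    ring)

theorem le_of_pos_of_radial_supersolution {h h' h'' : ℝ → ℝ} {A μ a b : ℝ} (hA : 2 ≤ A)
    (ha : 0 < a) (hab : a < b)
    (hd : ∀ ρ ∈ Ioo a b, HasDerivAt h (h' ρ) ρ)
    (hd' : ∀ ρ ∈ Ioo a b, HasDerivAt h' (h'' ρ) ρ)
    (hpos : ∀ ρ ∈ Ioo a b, 0 < h ρ)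
    (hsuper : ∀ ρ ∈ Ioo a b, h'' ρ + A * (h' ρ / ρ) + μ * h ρ ≤ 0) :
    μ ≤ A * (A - 2) / (4 * a ^ 2) + (π / (b - a)) ^ 2 := by
  by_contra! hμ
  obtain ⟨m, rfl⟩ : ∃ m, A = 2 * m := ⟨A / 2, by ring⟩
  have hm : 0 ≤ m * (m - 1) := mul_nonneg (by linarith) (by linarith)
  set κ := m * (m - 1) / a ^ 2
  have hκ : 2 * m * (2 * m - 2) / (4 * a ^ 2) = κ := by simp only [κ]; field_simp; ring
  rw [hκ] at hμ
  set K := √(μ - κ)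
  have hK2 : K ^ 2 = μ - κ := sq_sqrt (by nlinarith [sq_nonneg (π / (b - a))])
  have hK : 0 < K := sqrt_pos.2 (by nlinarith [sq_nonneg (π / (b - a))])
  -- the substitution `z = ρ^m h` removes the first-order term of `h'' + 2m h'/ρ`
  have hz' : ∀ ρ ∈ Ioo a b, HasDerivAt (fun ρ => ρ ^ m * (m * h ρ / ρ + h' ρ))
      (ρ ^ m * (m * (m - 1) * h ρ / ρ ^ 2 + (h'' ρ + 2 * m * (h' ρ / ρ)))) ρ := fun ρ hρ => by
    have hρ0 : 0 < ρ := ha.trans hρ.1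
    refine (hasDerivAt_rpow_mul_of_pos hρ0 ((((hd ρ hρ).const_mul m).fun_div
      (hasDerivAt_id' ρ) hρ0.ne').fun_add (hd' ρ hρ))).congr_deriv ?_
    field_simp
    ring
  have hineq : ∀ ρ ∈ Ioo a b, ρ ^ m * (m * (m - 1) * h ρ / ρ ^ 2 + (h'' ρ + 2 * m * (h' ρ / ρ)))
      ≤ -K ^ 2 * (ρ ^ m * h ρ) := fun ρ hρ => by
    have hquot : m * (m - 1) * h ρ / ρ ^ 2 ≤ κ * h ρ :=
      calc m * (m - 1) * h ρ / ρ ^ 2 ≤ m * (m - 1) * h ρ / a ^ 2 :=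
            div_le_div_of_nonneg_left (mul_nonneg hm (hpos ρ hρ).le) (by positivity)
              (pow_le_pow_left₀ ha.le hρ.1.le 2)
        _ = κ * h ρ := by ring
    have hρm : 0 < ρ ^ m := rpow_pos_of_pos (ha.trans hρ.1) m
    rw [hK2]
    nlinarith [hsuper ρ hρ]
  have hlen := sub_le_pi_div_of_pos_of_deriv2_le_neg_sq_mul hK
    (fun ρ hρ => hasDerivAt_rpow_mul_of_pos (ha.trans hρ.1) (hd ρ hρ)) hz'
    (fun ρ hρ => mul_pos (rpow_pos_of_pos (ha.trans hρ.1) m) (hpos ρ hρ)) hineq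
  rw [le_div_comm₀ (by linarith) hK] at hlen
  nlinarith [pow_le_pow_left₀ (by positivity) hlen 2]

theorem EuclideanSpace.norm_smul_single_add_smul_single {N : ℕ} {i j : Fin N} (hij : i ≠ j)
    (a b : ℝ) :
    ‖a • EuclideanSpace.single i (1 : ℝ) + b • EuclideanSpace.single j 1‖ = √(a ^ 2 + b ^ 2) := by
  have hinner :
      inner ℝ (a • EuclideanSpace.single i (1 : ℝ)) (b • EuclideanSpace.single j 1) = 0 := by
    simp [real_inner_smul_left, real_inner_smul_right, EuclideanSpace.inner_single_left, hij]
  rw [← sqrt_sq (norm_nonneg _), norm_add_sq_real, hinner, norm_smul, norm_smul]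
  simp [PiLp.norm_single]

theorem lap_of_radial {N : ℕ} (i₀ : Fin N) {f : EuclideanSpace ℝ (Fin N) → ℝ}
    (hf : ContDiff ℝ 2 f) (hrad : ∀ x y : EuclideanSpace ℝ (Fin N), ‖x‖ = ‖y‖ → f x = f y)
    {ρ : ℝ} (hρ : 0 < ρ) :
    lap f (ρ • EuclideanSpace.single i₀ 1) =
      iteratedDeriv 2 (fun t : ℝ => f (t • EuclideanSpace.single i₀ 1)) ρ +
        ((N : ℝ) - 1) * (deriv (fun t : ℝ => f (t • EuclideanSpace.single i₀ 1)) ρ / ρ) := by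
  set g : ℝ → ℝ := fun t : ℝ => f (t • EuclideanSpace.single i₀ 1)
  have hg : ContDiff ℝ 2 g := hf.comp (contDiff_id.smul contDiff_const)
  have hterm : ∀ i, iteratedDeriv 2
      (fun s : ℝ => f (ρ • EuclideanSpace.single i₀ 1 + s • EuclideanSpace.single i 1)) 0 =
      if i = i₀ then iteratedDeriv 2 g ρ else deriv g ρ / ρ := by
    intro i
    split_ifs with hi
    · subst hi
      simp_rw [← add_smul]
      simpa using congrFun (iteratedDeriv_comp_const_add 2 g ρ) 0
    · have : (fun s : ℝ => f (ρ • EuclideanSpace.single i₀ 1 + s • EuclideanSpace.single i 1)) =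
          fun s => g √(ρ ^ 2 + s ^ 2) := by
        ext s
        refine hrad _ _ ?_
        rw [EuclideanSpace.norm_smul_single_add_smul_single (Ne.symm hi), norm_smul,
          PiLp.norm_single, norm_one, mul_one, norm_of_nonneg (sqrt_nonneg _)]
      rw [this, iteratedDeriv_two_comp_sqrt_sq_add hg hρ]
  rw [lap, Finset.sum_congr rfl fun i _ => hterm i, Finset.sum_ite, Finset.filter_eq',
    Finset.filter_ne', Finset.sum_const, Finset.sum_const, Finset.card_erase_of_mem
    (Finset.mem_univ _)]
  simp [Nat.cast_sub i₀.pos]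

theorem le_of_lap_add_mul_nonneg_of_neg_on_annulus {N : ℕ} (hN : 3 ≤ N)
    {f : EuclideanSpace ℝ (Fin N) → ℝ} (hf : ContDiff ℝ 2 f)
    (hrad : ∀ x y : EuclideanSpace ℝ (Fin N), ‖x‖ = ‖y‖ → f x = f y) {μ a b : ℝ} (ha : 0 < a)
    (hab : a < b)
    (hsuper : ∀ x : EuclideanSpace ℝ (Fin N), a < ‖x‖ → ‖x‖ < b → 0 ≤ lap f x + μ * f x)
    (hneg : ∀ x : EuclideanSpace ℝ (Fin N), a < ‖x‖ → ‖x‖ < b → f x < 0) :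
    μ ≤ ((N : ℝ) - 1) * ((N : ℝ) - 3) / (4 * a ^ 2) + (π / (b - a)) ^ 2 := by
  set e := EuclideanSpace.single (⟨0, by omega⟩ : Fin N) (1 : ℝ)
  set g : ℝ → ℝ := fun t => f (t • e)
  have hg : ContDiff ℝ 2 g := hf.comp (contDiff_id.smul contDiff_const)
  have hg' : Differentiable ℝ (deriv g) :=
    (hg.iterate_deriv' 1 1).differentiable one_ne_zero
  have hmem : ∀ ρ ∈ Ioo a b, a < ‖ρ • e‖ ∧ ‖ρ • e‖ < b := fun ρ hρ => by
    rwa [norm_smul, PiLp.norm_single, norm_one, mul_one, norm_of_nonneg (ha.trans hρ.1).le]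
  have hN' : (2 : ℝ) ≤ (N : ℝ) - 1 := by
    have : (3 : ℝ) ≤ N := by exact_mod_cast hN
    linarith
  have key := le_of_pos_of_radial_supersolution (h := fun t => -g t) (h' := fun t => -deriv g t)
    (h'' := fun t => -iteratedDeriv 2 g t) (μ := μ) hN' ha hab
    (fun ρ _ => ((hg.differentiable two_ne_zero) ρ).hasDerivAt.neg)
    (fun ρ _ => by
      rw [iteratedDeriv_succ, iteratedDeriv_one]
      exact (hg' ρ).hasDerivAt.neg)
    (fun ρ hρ => neg_pos.2 (hneg _ (hmem ρ hρ).1 (hmem ρ hρ).2))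
    (fun ρ hρ => by
      have := hsuper (ρ • e) (hmem ρ hρ).1 (hmem ρ hρ).2
      rw [lap_of_radial _ hf hrad (ha.trans hρ.1)] at this
      simp only [g, e, neg_div, mul_neg] at this ⊢
      linarith)
  convert key using 3
  ring

theorem le_of_semilinear_of_neg_on_annulus {N : ℕ} (hN : 3 ≤ N)
    {f : EuclideanSpace ℝ (Fin N) → ℝ} (hf : ContDiff ℝ 2 f)
    (hrad : ∀ x y : EuclideanSpace ℝ (Fin N), ‖x‖ = ‖y‖ → f x = f y) {μ p : ℝ}
    (hsol : ∀ x ∈ ball (0 : EuclideanSpace ℝ (Fin N)) 1,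
      -lap f x = μ * f x + |f x| ^ (p - 1) * f x)
    (hneg : ∀ x : EuclideanSpace ℝ (Fin N), 1 / 2 < ‖x‖ → ‖x‖ < 1 → f x < 0) :
    μ ≤ ((N : ℝ) - 1) * ((N : ℝ) - 3) + 4 * π ^ 2 := by
  have := le_of_lap_add_mul_nonneg_of_neg_on_annulus hN hf hrad one_half_pos one_half_lt_one
    (fun x h1 h2 => by
      have hsolx := hsol x (mem_ball_zero_iff.2 h2)
      nlinarith [hneg x h1 h2, rpow_nonneg (abs_nonneg (f x)) (p - 1)]) hneg
  convert this using 2 <;> ring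

theorem eq_zero_of_pos_of_neg {E : Type*} [NormedAddCommGroup E] [NormedSpace ℝ E]
    {f : E → ℝ} (hf : Continuous f) {r R : ℝ} (hr : 0 < r) (hrR : r < R)
    (hpos : ∀ x, ‖x‖ < r → 0 < f x) (hneg : ∀ x, r < ‖x‖ → ‖x‖ < R → f x < 0)
    {x : E} (hx : ‖x‖ = r) : f x = 0 := by
  have hφ : Tendsto (fun s : ℝ => f (s • x)) (𝓝 1) (𝓝 (f x)) := by
    have : Continuous fun s : ℝ => f (s • x) := by fun_prop
    simpa using this.tendsto 1
  have hnorm : ∀ s : ℝ, 0 < s → ‖s • x‖ = s * r := fun s hs => by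
    rw [norm_smul, norm_of_nonneg hs.le, hx]
  apply le_antisymm
  · refine le_of_tendsto (hφ.mono_left (nhdsWithin_le_nhds (s := Ioi 1))) ?_
    filter_upwards [Ioo_mem_nhdsGT (one_lt_div hr |>.2 hrR)] with s hs
    have h0 : 0 < s := zero_lt_one.trans hs.1
    refine (hneg _ ?_ ?_).le <;> rw [hnorm s h0]
    · nlinarith [hs.1]
    · exact (lt_div_iff₀ hr).1 hs.2
  · refine ge_of_tendsto (hφ.mono_left (nhdsWithin_le_nhds (s := Iio 1))) ?_
    filter_upwards [Ioo_mem_nhdsLT zero_lt_one] with s hs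
    exact (hpos _ (by rw [hnorm s hs.1]; nlinarith [hs.2])).le

section Integrals

variable {E : Type*} [NormedAddCommGroup E] [InnerProductSpace ℝ E] [FiniteDimensional ℝ E]
  [MeasurableSpace E] [BorelSpace E] (μ : Measure E) [μ.IsAddHaarMeasure]

theorem setIntegral_ball_eq_of_eqOn_of_eq_zero {F G : E → ℝ} {r R : ℝ} (hr : 0 < r)
    (hrR : r ≤ R) (hFG : EqOn F G (ball 0 r)) (hF : ∀ x, r < ‖x‖ → ‖x‖ < R → F x = 0) :
    ∫ x in ball 0 R, F x ∂μ = ∫ x in ball 0 r, G x ∂μ := by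
  have hae : ∀ᵐ x ∂μ, x ∈ ball (0 : E) R → F x = (ball (0 : E) r).indicator G x := by
    filter_upwards [measure_eq_zero_iff_ae_notMem.1 (Measure.addHaar_sphere_of_ne_zero μ 0
      hr.ne')] with x hx hxR
    rw [mem_sphere_zero_iff_norm] at hx
    rw [mem_ball_zero_iff] at hxR
    rcases lt_or_gt_of_ne hx with h | h
    · rw [indicator_of_mem (mem_ball_zero_iff.2 h), hFG (mem_ball_zero_iff.2 h)]
    · rw [indicator_of_notMem (by simpa using h.le), hF x h hxR]
  rw [setIntegral_congr_ae measurableSet_ball hae, setIntegral_indicator measurableSet_ball,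
    inter_eq_self_of_subset_right (ball_subset_ball hrR)]

theorem setIntegral_ball_one_pow_mul_comp_smul (F : E → ℝ) {r : ℝ} (hr : 0 < r) :
    ∫ y in ball 0 1, r ^ Module.finrank ℝ E * F (r • y) ∂μ = ∫ x in ball 0 r, F x ∂μ := by
  rw [integral_const_mul, Measure.setIntegral_comp_smul_of_pos μ F _ hr, smul_unitBall_of_pos hr,
    smul_eq_mul, ← mul_assoc, mul_inv_cancel₀ (by positivity), one_mul]

end Integrals

section Rescaling

variable {N : ℕ}

theorem gradient_const_mul_comp_smul {f : EuclideanSpace ℝ (Fin N) → ℝ} (hf : Differentiable ℝ f)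
    (c r : ℝ) (y : EuclideanSpace ℝ (Fin N)) :
    gradient (fun x => c * f (r • x)) y = (c * r) • gradient f (r • y) := by
  have hsmul : HasFDerivAt (fun x : EuclideanSpace ℝ (Fin N) => r • x)
      (r • ContinuousLinearMap.id ℝ _) y := (ContinuousLinearMap.id ℝ _).hasFDerivAt.const_smul r
  have hcomp := ((hf (r • y)).hasFDerivAt.comp y hsmul).const_mul c
  have heq : c • (fderiv ℝ f (r • y)).comp (r • ContinuousLinearMap.id ℝ _) =
      (c * r) • fderiv ℝ f (r • y) := by
    ext w
    simp [mul_assoc]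
  have hcomp' : HasFDerivAt (fun x => c * f (r • x)) ((c * r) • fderiv ℝ f (r • y)) y :=
    heq ▸ hcomp
  rw [gradient, hcomp'.fderiv, map_smul, gradient]

theorem lap_const_mul_comp_smul {f : EuclideanSpace ℝ (Fin N) → ℝ} (hf : ContDiff ℝ 2 f)
    (c r : ℝ) (y : EuclideanSpace ℝ (Fin N)) :
    lap (fun x => c * f (r • x)) y = c * r ^ 2 * lap f (r • y) := by
  rw [lap, lap, Finset.mul_sum]
  refine Finset.sum_congr rfl fun i _ => ?_
  have hφ : ContDiff ℝ 2 fun t : ℝ => f (r • y + t • EuclideanSpace.single i 1) := by fun_prop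
  simp_rw [smul_add, smul_smul]
  rw [iteratedDeriv_const_mul_field, iteratedDeriv_comp_const_mul hφ]
  simp only [mul_zero, mul_assoc]

/-- The rescaling `û` of the paper. -/
noncomputable def rescale (N : ℕ) (r : ℝ) (u : EuclideanSpace ℝ (Fin N) → ℝ)
    (y : EuclideanSpace ℝ (Fin N)) : ℝ :=
  r ^ (((N : ℝ) - 2) / 2) * u (r • y)

theorem contDiff_rescale {n : WithTop ℕ∞} {u : EuclideanSpace ℝ (Fin N) → ℝ}
    (hu : ContDiff ℝ n u) (r : ℝ) : ContDiff ℝ n (rescale N r u) := by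
  unfold rescale
  fun_prop

theorem rescale_eq_of_norm_eq {u : EuclideanSpace ℝ (Fin N) → ℝ}
    (hu : ∀ x y : EuclideanSpace ℝ (Fin N), ‖x‖ = ‖y‖ → u x = u y) (r : ℝ)
    (x y : EuclideanSpace ℝ (Fin N)) (hxy : ‖x‖ = ‖y‖) : rescale N r u x = rescale N r u y := by
  rw [rescale, rescale, hu (r • x) (r • y) (by rw [norm_smul, norm_smul, hxy])]

theorem norm_smul_lt_of_mem_ball_one {r : ℝ} (hr : 0 < r) {y : EuclideanSpace ℝ (Fin N)}
    (hy : y ∈ ball 0 1) : ‖r • y‖ < r := by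
  rw [norm_smul, norm_of_nonneg hr.le]
  exact mul_lt_of_lt_one_right hr (mem_ball_zero_iff.1 hy)

theorem rescale_pos {u : EuclideanSpace ℝ (Fin N) → ℝ} {r : ℝ} (hr : 0 < r)
    (hu : ∀ x : EuclideanSpace ℝ (Fin N), ‖x‖ < r → 0 < u x) :
    ∀ y ∈ ball (0 : EuclideanSpace ℝ (Fin N)) 1, 0 < rescale N r u y := fun _ hy =>
  mul_pos (rpow_pos_of_pos hr _) (hu _ (norm_smul_lt_of_mem_ball_one hr hy))

theorem rescale_eq_zero {u : EuclideanSpace ℝ (Fin N) → ℝ} {r : ℝ} (hr : 0 < r)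
    (hu : ∀ x : EuclideanSpace ℝ (Fin N), ‖x‖ = r → u x = 0) :
    ∀ y : EuclideanSpace ℝ (Fin N), ‖y‖ = 1 → rescale N r u y = 0 := fun y hy => by
  rw [rescale, hu _ (by rw [norm_smul, norm_of_nonneg hr.le, hy, mul_one]), mul_zero]

theorem neg_lap_rescale {u : EuclideanSpace ℝ (Fin N) → ℝ} (hu : ContDiff ℝ 2 u)
    (hN : (N : ℝ) ≠ 2) {r μ p : ℝ} (hr0 : 0 < r) (hr1 : r < 1)
    (hp : p = ((N : ℝ) + 2) / ((N : ℝ) - 2))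
    (hpos : ∀ x : EuclideanSpace ℝ (Fin N), ‖x‖ < r → 0 < u x)
    (hsol : ∀ x ∈ ball (0 : EuclideanSpace ℝ (Fin N)) 1,
      -lap u x = μ * u x + |u x| ^ (p - 1) * u x) :
    ∀ y ∈ ball (0 : EuclideanSpace ℝ (Fin N)) 1,
      -lap (rescale N r u) y = μ * r ^ 2 * rescale N r u y + rescale N r u y ^ p := by
  intro y hy
  have hry := norm_smul_lt_of_mem_ball_one hr0 hy
  have hy0 := hpos _ hry
  have hsoly := hsol _ (mem_ball_zero_iff.2 (hry.trans hr1))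
  set s := r ^ (((N : ℝ) - 2) / 2)
  have hs : 0 < s := rpow_pos_of_pos hr0 _
  have hsp : s ^ p = s * r ^ 2 := by
    rw [← rpow_mul hr0.le, ← rpow_natCast, ← rpow_add hr0, hp]
    congr 1
    field_simp [sub_ne_zero.2 hN]
    push_cast
    ring
  have hup : |u (r • y)| ^ (p - 1) * u (r • y) = u (r • y) ^ p := by
    rw [abs_of_pos hy0, rpow_sub_one hy0.ne', div_mul_cancel₀ _ hy0.ne']
  change -lap (fun x => s * u (r • x)) y = μ * r ^ 2 * (s * u (r • y)) + (s * u (r • y)) ^ p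
  rw [lap_const_mul_comp_smul hu, mul_rpow hs.le hy0.le, hsp]
  rw [hup] at hsoly
  linear_combination s * r ^ 2 * hsoly

noncomputable def ballEnergy (N : ℕ) (R μ : ℝ) (v : EuclideanSpace ℝ (Fin N) → ℝ) : ℝ :=
  (1 / 2) * (∫ x in ball (0 : EuclideanSpace ℝ (Fin N)) R,
      (‖gradient v x‖ ^ 2 - μ * (v x) ^ 2)) -
    (1 / (2 * (N : ℝ) / ((N : ℝ) - 2))) *
      ∫ x in ball (0 : EuclideanSpace ℝ (Fin N)) R, |v x| ^ (2 * (N : ℝ) / ((N : ℝ) - 2))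

theorem energy_eq_ballEnergy (μ : ℝ) (v : EuclideanSpace ℝ (Fin N) → ℝ) :
    energy N μ v = ballEnergy N 1 μ v := rfl

theorem ballEnergy_one_rescale (hN : (N : ℝ) ≠ 2) {u : EuclideanSpace ℝ (Fin N) → ℝ}
    (hu : Differentiable ℝ u) {r : ℝ} (hr : 0 < r) (μ : ℝ) :
    ballEnergy N 1 (μ * r ^ 2) (rescale N r u) = ballEnergy N r μ u := by
  set s := r ^ (((N : ℝ) - 2) / 2)
  have hs : 0 < s := rpow_pos_of_pos hr _
  have hs2 : s ^ 2 * r ^ 2 = r ^ N := by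
    rw [← rpow_natCast, ← rpow_natCast, ← rpow_mul hr.le, ← rpow_natCast, ← rpow_add hr]
    congr 1
    push_cast
    ring
  have hs2star : s ^ (2 * (N : ℝ) / ((N : ℝ) - 2)) = r ^ N := by
    rw [← rpow_mul hr.le, ← rpow_natCast]
    congr 1
    field_simp [sub_ne_zero.2 hN]
  have hgrad : ∀ y, ‖gradient (rescale N r u) y‖ ^ 2 - μ * r ^ 2 * rescale N r u y ^ 2 =
      r ^ N * (‖gradient u (r • y)‖ ^ 2 - μ * u (r • y) ^ 2) := fun y => by
    rw [show rescale N r u = fun x => s * u (r • x) from rfl, gradient_const_mul_comp_smul hu,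
      norm_smul, norm_of_nonneg (by positivity), ← hs2]
    ring
  have hpow : ∀ y, |rescale N r u y| ^ (2 * (N : ℝ) / ((N : ℝ) - 2)) =
      r ^ N * |u (r • y)| ^ (2 * (N : ℝ) / ((N : ℝ) - 2)) := fun y => by
    rw [rescale, abs_mul, abs_of_pos hs, mul_rpow hs.le (abs_nonneg _), hs2star]
  have hvar := fun F : EuclideanSpace ℝ (Fin N) → ℝ =>
    setIntegral_ball_one_pow_mul_comp_smul volume F hr
  simp only [finrank_euclideanSpace_fin] at hvar
  simp only [ballEnergy, hgrad, hpow]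
  rw [← hvar, ← hvar]

theorem ballEnergy_one_posPart (hN : 2 < N) {u : EuclideanSpace ℝ (Fin N) → ℝ} {r : ℝ} (hr0 : 0 < r)
    (hr1 : r < 1) (hpos : ∀ x : EuclideanSpace ℝ (Fin N), ‖x‖ < r → 0 < u x)
    (hneg : ∀ x : EuclideanSpace ℝ (Fin N), r < ‖x‖ → ‖x‖ < 1 → u x < 0) (μ : ℝ) :
    ballEnergy N 1 μ (fun x => max (u x) 0) = ballEnergy N r μ u := by
  have hin : ∀ x ∈ ball (0 : EuclideanSpace ℝ (Fin N)) r, (fun x => max (u x) 0) =ᶠ[𝓝 x] u :=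
    fun x hx => eventually_of_mem (isOpen_ball.mem_nhds hx) fun y hy =>
      max_eq_left (hpos y (mem_ball_zero_iff.1 hy)).le
  have hout : ∀ x : EuclideanSpace ℝ (Fin N), r < ‖x‖ → ‖x‖ < 1 →
      (fun x => max (u x) 0) =ᶠ[𝓝 x] fun _ => 0 := fun x h1 h2 =>
    eventually_of_mem (((isOpen_lt continuous_const continuous_norm).inter
      (isOpen_lt continuous_norm continuous_const)).mem_nhds ⟨h1, h2⟩) fun y hy =>
        max_eq_right (hneg y hy.1 hy.2).le
  have hexp : 0 < 2 * (N : ℝ) / ((N : ℝ) - 2) := by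
    have : (2 : ℝ) < N := by exact_mod_cast hN
    exact div_pos (by linarith) (by linarith)
  unfold ballEnergy
  rw [setIntegral_ball_eq_of_eqOn_of_eq_zero volume hr0 hr1.le
      (G := fun x => ‖gradient u x‖ ^ 2 - μ * u x ^ 2)
      (fun x hx => by simp only [(hin x hx).gradient_eq, (hin x hx).eq_of_nhds])
      (fun x h1 h2 => by simp [(hout x h1 h2).gradient_eq, (hout x h1 h2).eq_of_nhds]),
    setIntegral_ball_eq_of_eqOn_of_eq_zero volume hr0 hr1.le
      (G := fun x => |u x| ^ (2 * (N : ℝ) / ((N : ℝ) - 2)))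
      (fun x hx => by simp only [(hin x hx).eq_of_nhds])
      (fun x h1 h2 => by
        simp [(hout x h1 h2).eq_of_nhds, zero_rpow hexp.ne'])]

theorem energy_posPart_eq_energy_rescale (hN : 2 < N) {u : EuclideanSpace ℝ (Fin N) → ℝ}
    (hu : Differentiable ℝ u) {r : ℝ} (hr0 : 0 < r) (hr1 : r < 1)
    (hpos : ∀ x : EuclideanSpace ℝ (Fin N), ‖x‖ < r → 0 < u x)
    (hneg : ∀ x : EuclideanSpace ℝ (Fin N), r < ‖x‖ → ‖x‖ < 1 → u x < 0) (μ : ℝ) :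
    energy N μ (fun x => max (u x) 0) = energy N (μ * r ^ 2) (rescale N r u) := by
  have hN2 : (N : ℝ) ≠ 2 := by norm_cast; omega
  rw [energy_eq_ballEnergy, energy_eq_ballEnergy, ballEnergy_one_posPart hN hr0 hr1 hpos hneg,
    ballEnergy_one_rescale hN2 hu hr0]

end Rescaling

theorem tendsto_mul_sq_nhdsGT_zero {α : Type*} {l : Filter α} {f g : α → ℝ} {C : ℝ}
    (hf : ∀ n, 0 < f n) (hfC : ∀ᶠ n in l, f n ≤ C) (hg : Tendsto g l (𝓝 0))
    (hg0 : ∀ n, g n ≠ 0) : Tendsto (fun n => f n * g n ^ 2) l (𝓝[>] 0) := by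
  have hpos : ∀ n, 0 < f n * g n ^ 2 := fun n => mul_pos (hf n) (sq_pos_of_ne_zero (hg0 n))
  refine tendsto_nhdsWithin_iff.2 ⟨?_, Eventually.of_forall hpos⟩
  have hC : Tendsto (fun n => C * g n ^ 2) l (𝓝 0) := by simpa using (hg.pow 2).const_mul C
  refine squeeze_zero' (Eventually.of_forall fun n => (hpos n).le)
    (hfC.mono fun n hn => mul_le_mul_of_nonneg_right hn (sq_nonneg _)) hC

theorem stmt16_general (N : ℕ) (hN : N = 4 ∨ N = 5 ∨ N = 6)
    (p : ℝ) (hp : p = ((N : ℝ) + 2) / ((N : ℝ) - 2))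
    (lam r : ℕ → ℝ)
    (hlampos : ∀ n, 0 < lam n)
    (hrio : ∀ n, r n ∈ Set.Ioo (0 : ℝ) 1) (hr0 : Tendsto r atTop (nhds 0))
    (u : ℕ → EuclideanSpace ℝ (Fin N) → ℝ)
    (hreg : ∀ n, ContDiff ℝ 2 (u n))
    (hrad : ∀ n, ∀ x y : EuclideanSpace ℝ (Fin N), ‖x‖ = ‖y‖ → u n x = u n y)
    (hsol : ∀ n, ∀ x ∈ ball (0 : EuclideanSpace ℝ (Fin N)) 1,
      -lap (u n) x = lam n * u n x + |u n x| ^ (p - 1) * u n x)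
    (hpos : ∀ n, ∀ x : EuclideanSpace ℝ (Fin N), ‖x‖ < r n → 0 < u n x)
    (hneg : ∀ n, ∀ x : EuclideanSpace ℝ (Fin N), r n < ‖x‖ → ‖x‖ < 1 → u n x < 0)
    (S : ℝ)
    (c : ℝ → ℝ) (ε : ℝ) (hε : 0 < ε)
    -- uniqueness/least-energy hypothesis: for `μ > 0` small every positive radial
    -- solution of `-Δv = μ v + v^p` in `B₁` with zero boundary values has energy `c μ`
    (hmin : ∀ μ : ℝ, 0 < μ → μ < ε → ∀ v : EuclideanSpace ℝ (Fin N) → ℝ,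
      ContDiff ℝ 2 v → (∀ x y : EuclideanSpace ℝ (Fin N), ‖x‖ = ‖y‖ → v x = v y) →
      (∀ x ∈ ball (0 : EuclideanSpace ℝ (Fin N)) 1, 0 < v x) →
      (∀ x : EuclideanSpace ℝ (Fin N), ‖x‖ = 1 → v x = 0) →
      (∀ x ∈ ball (0 : EuclideanSpace ℝ (Fin N)) 1, -lap v x = μ * v x + (v x) ^ p) →
      energy N μ v = c μ)
    (hc : Tendsto c (nhdsWithin 0 (Set.Ioi 0)) (nhds ((1 / (N : ℝ)) * S ^ ((N : ℝ) / 2)))) :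
    Tendsto (fun n => energy N (lam n) (fun x => max (u n x) 0)) atTop
      (nhds ((1 / (N : ℝ)) * S ^ ((N : ℝ) / 2))) := by
  have hsmall : ∀ᶠ n in atTop, r n < 1 / 2 := hr0.eventually_lt_const one_half_pos
  have hlam : ∀ᶠ n in atTop, lam n ≤ ((N : ℝ) - 1) * ((N : ℝ) - 3) + 4 * π ^ 2 :=
    hsmall.mono fun n hn => le_of_semilinear_of_neg_on_annulus (by omega) (hreg n) (hrad n)
      (hsol n) fun x h1 h2 => hneg n x (hn.trans h1) h2
  have hμ := tendsto_mul_sq_nhdsGT_zero hlampos hlam hr0 fun n => (hrio n).1.ne'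
  have hμε : ∀ᶠ n in atTop, lam n * r n ^ 2 < ε :=
    hμ.eventually (eventually_nhdsWithin_of_eventually_nhds (eventually_lt_nhds hε))
  refine (hc.comp hμ).congr' (hμε.mono fun n hnε => ?_)
  obtain ⟨hr0n, hr1n⟩ := hrio n
  have hu0 : ∀ x : EuclideanSpace ℝ (Fin N), ‖x‖ = r n → u n x = 0 := fun x hx =>
    eq_zero_of_pos_of_neg (hreg n).continuous hr0n hr1n (hpos n) (hneg n) hx
  change c _ = energy N (lam n) fun x => max (u n x) 0
  rw [energy_posPart_eq_energy_rescale (by omega) ((hreg n).differentiable two_ne_zero) hr0n hr1n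
    (hpos n) (hneg n)]
  exact (hmin _ (mul_pos (hlampos n) (pow_pos hr0n 2)) hnε _ (contDiff_rescale (hreg n) _)
    (rescale_eq_of_norm_eq (hrad n) _) (rescale_pos hr0n (hpos n)) (rescale_eq_zero hr0n hu0)
    (neg_lap_rescale (hreg n) (by norm_cast; omega) hr0n hr1n hp (hpos n) (hsol n))).symm

theorem stmt16 (N : ℕ) (hN : N = 4 ∨ N = 5 ∨ N = 6)
    (p : ℝ) (hp : p = ((N : ℝ) + 2) / ((N : ℝ) - 2))
    (γ lam r : ℕ → ℝ) (hγ : Tendsto γ atTop atTop)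
    (hlampos : ∀ n, 0 < lam n)
    (hrio : ∀ n, r n ∈ Set.Ioo (0 : ℝ) 1) (hr0 : Tendsto r atTop (nhds 0))
    (u : ℕ → EuclideanSpace ℝ (Fin N) → ℝ)
    (hreg : ∀ n, ContDiff ℝ 2 (u n))
    (hrad : ∀ n, ∀ x y : EuclideanSpace ℝ (Fin N), ‖x‖ = ‖y‖ → u n x = u n y)
    (hsol : ∀ n, ∀ x ∈ ball (0 : EuclideanSpace ℝ (Fin N)) 1,
      -lap (u n) x = lam n * u n x + |u n x| ^ (p - 1) * u n x)
    (hbd : ∀ n, ∀ x : EuclideanSpace ℝ (Fin N), ‖x‖ = 1 → u n x = 0)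
    (hpos : ∀ n, ∀ x : EuclideanSpace ℝ (Fin N), ‖x‖ < r n → 0 < u n x)
    (hneg : ∀ n, ∀ x : EuclideanSpace ℝ (Fin N), r n < ‖x‖ → ‖x‖ < 1 → u n x < 0)
    (hmax : ∀ n, ∀ x : EuclideanSpace ℝ (Fin N), |u n x| ≤ u n 0)
    (hinf : Tendsto (fun n => u n 0) atTop atTop)
    (S : ℝ) (hS : 0 < S)
    (c : ℝ → ℝ) (ε : ℝ) (hε : 0 < ε)
    -- uniqueness/least-energy hypothesis: for `μ > 0` small every positive radial
    -- solution of `-Δv = μ v + v^p` in `B₁` with zero boundary values has energy `c μ`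
    (hmin : ∀ μ : ℝ, 0 < μ → μ < ε → ∀ v : EuclideanSpace ℝ (Fin N) → ℝ,
      ContDiff ℝ 2 v → (∀ x y : EuclideanSpace ℝ (Fin N), ‖x‖ = ‖y‖ → v x = v y) →
      (∀ x ∈ ball (0 : EuclideanSpace ℝ (Fin N)) 1, 0 < v x) →
      (∀ x : EuclideanSpace ℝ (Fin N), ‖x‖ = 1 → v x = 0) →
      (∀ x ∈ ball (0 : EuclideanSpace ℝ (Fin N)) 1, -lap v x = μ * v x + (v x) ^ p) →
      energy N μ v = c μ)
    (hc : Tendsto c (nhdsWithin 0 (Set.Ioi 0)) (nhds ((1 / (N : ℝ)) * S ^ ((N : ℝ) / 2)))) :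
    Tendsto (fun n => energy N (lam n) (fun x => max (u n x) 0)) atTop
      (nhds ((1 / (N : ℝ)) * S ^ ((N : ℝ) / 2))) :=
  stmt16_general N hN p hp lam r hlampos hrio hr0 u hreg hrad hsol hpos hneg S c ε hε hmin hc
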